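/- arXiv:2509.08691 — 4 statements merged into one kernel-verified Lean document; each statement's English description precedes it below -/
import Mathlib

section
/- For all α ∈ [0,1], k(α) := 25α(α² − 1) + √(1−α²)·(12α⁴ − 12α² + 16) ≥ 0. -/
/-- For all `α ∈ [0,1]`, `25α(α²−1) + √(1−α²)·(12α⁴−12α²+16) ≥ 0`. -/
theorem stmt_8 :
    ∀ α ∈ Set.Icc (0 : ℝ) 1,
      0 ≤ 25 * α * (α ^ 2 - 1) +
        Real.sqrt (1 - α ^ 2) * (12 * α ^ 4 - 12 * α ^ 2 + 16) := by
  intro α ⟨h0, h1⟩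
  set s := Real.sqrt (1 - α ^ 2) with hs
  have hnn : (0:ℝ) ≤ 1 - α ^ 2 := by nlinarith
  have hs0 : 0 ≤ s := Real.sqrt_nonneg _
  have hs2 : s ^ 2 = 1 - α ^ 2 := Real.sq_sqrt hnn
  have hB : (0:ℝ) ≤ 12 * α ^ 4 - 12 * α ^ 2 + 16 := by nlinarith [sq_nonneg (2*α^2 - 1)]
  have hA : (0:ℝ) ≤ 25 * α * (1 - α ^ 2) := by positivity
  have hp : (0:ℝ) ≤ (12*α^4 - 12*α^2 + 16)^2 - 625 * α^2 * (1 - α^2) := by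
    nlinarith [sq_nonneg (2*α^2 - 1), sq_nonneg (α^2*(α^2-1))]
  have key : (25 * α * (1 - α ^ 2))^2 ≤ (s * (12 * α ^ 4 - 12 * α ^ 2 + 16))^2 := by
    nlinarith [mul_nonneg hnn hp, hs2]
  have hle : 25 * α * (1 - α ^ 2) ≤ s * (12 * α ^ 4 - 12 * α ^ 2 + 16) := by
    nlinarith [key, hA, mul_nonneg hs0 hB]
  nlinarith [hle]
end

section
/- Define g(α,γ) = 4α − 4α³ − √(1−α²)·(γ−2)² + 8α²·√(1−α²)·γ(γ−1)(α²−1). For every fixed α ∈ [0,1], the partial derivative ∂g/∂γ = √(1−α²)·[4 − 2γ + 8α²(α²−1)(2γ−1)] is nonnegative for all γ ∈ [0, 0.4]; hence g(α,·) is nondecreasing on [0,0.4] and g(α,γ) ≤ g(α,0.4) for all γ ∈ [0,0.4]. -/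
open Real Set

theorem hasDerivAt_purificationFactor (α s γ : ℝ) :
    HasDerivAt
      (fun γ => 4 * α - 4 * α ^ 3 - s * (γ - 2) ^ 2 + 8 * α ^ 2 * s * γ * (γ - 1) * (α ^ 2 - 1))
      (s * (4 - 2 * γ + 8 * α ^ 2 * (α ^ 2 - 1) * (2 * γ - 1))) γ := by
  have hsq : HasDerivAt (fun γ : ℝ => (γ - 2) ^ 2) (2 * (γ - 2)) γ := by
    simpa using ((hasDerivAt_id' γ).sub_const 2).fun_pow 2
  have hcubic := (((hasDerivAt_id' γ).const_mul (8 * α ^ 2 * s)).fun_mul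
    ((hasDerivAt_id' γ).sub_const 1)).mul_const (α ^ 2 - 1)
  exact (((hasDerivAt_const γ (4 * α - 4 * α ^ 3)).sub (hsq.const_mul s)).add hcubic).congr_deriv
    (by ring)

theorem purificationFactor_deriv_nonneg {α γ : ℝ} (hα : α ^ 2 ≤ 1) (hγ : γ ≤ 1 / 2) :
    0 ≤ 4 - 2 * γ + 8 * α ^ 2 * (α ^ 2 - 1) * (2 * γ - 1) := by
  have hprod : 0 ≤ α ^ 2 * (1 - α ^ 2) * (1 - 2 * γ) :=
    mul_nonneg (mul_nonneg (sq_nonneg α) (by linarith)) (by linarith)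
  linarith

/-- Monotonicity in `γ` of the factor `g(α,γ)` from the fidelity-increase expression:
its `γ`-derivative `√(1−α²)·[4 − 2γ + 8α²(α²−1)(2γ−1)]` is nonnegative on `[0, 0.4]`,
so `g(α,·)` is nondecreasing there and bounded by its value at `γ = 0.4`. -/
theorem stmt_9 :
    let g : ℝ → ℝ → ℝ := fun α γ =>
      4 * α - 4 * α ^ 3 - Real.sqrt (1 - α ^ 2) * (γ - 2) ^ 2 +
        8 * α ^ 2 * Real.sqrt (1 - α ^ 2) * γ * (γ - 1) * (α ^ 2 - 1)
    ∀ α ∈ Set.Icc (0 : ℝ) 1,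
      (∀ γ ∈ Set.Icc (0 : ℝ) 0.4,
          HasDerivAt (g α)
            (Real.sqrt (1 - α ^ 2) * (4 - 2 * γ + 8 * α ^ 2 * (α ^ 2 - 1) * (2 * γ - 1))) γ ∧
          0 ≤ Real.sqrt (1 - α ^ 2) * (4 - 2 * γ + 8 * α ^ 2 * (α ^ 2 - 1) * (2 * γ - 1))) ∧
      MonotoneOn (g α) (Set.Icc (0 : ℝ) 0.4) ∧
      ∀ γ ∈ Set.Icc (0 : ℝ) 0.4, g α γ ≤ g α 0.4 := by
  intro g α hα
  have hα2 : α ^ 2 ≤ 1 := pow_le_one₀ hα.1 hα.2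
  have hderiv (γ : ℝ) := hasDerivAt_purificationFactor α (√(1 - α ^ 2)) γ
  have hnonneg : ∀ γ ∈ Icc (0 : ℝ) 0.4,
      0 ≤ √(1 - α ^ 2) * (4 - 2 * γ + 8 * α ^ 2 * (α ^ 2 - 1) * (2 * γ - 1)) := fun γ hγ =>
    mul_nonneg (sqrt_nonneg _) (purificationFactor_deriv_nonneg hα2 (by linarith [hγ.2]))
  have hmono : MonotoneOn (g α) (Icc 0 0.4) :=
    monotoneOn_of_hasDerivWithinAt_nonneg (convex_Icc _ _)
      (fun γ _ => (hderiv γ).continuousAt.continuousWithinAt)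
      (fun γ _ => (hderiv γ).hasDerivWithinAt) (fun γ hγ => hnonneg γ (interior_subset hγ))
  exact ⟨fun γ hγ => ⟨hderiv γ, hnonneg γ hγ⟩, hmono,
    fun γ hγ => hmono hγ (right_mem_Icc.2 (by norm_num)) hγ.2⟩
end

section
/- For all α ∈ [0,1] and γ ∈ [0,0.4]: (a) d(α,γ) := 2(1 + 2α√(1−α²)(γ−1)⁴) > 0; (b) f(α,γ) := αγ(γ−2)(γ−1)² ≤ 0; (c) g(α,γ) := 4α − 4α³ − √(1−α²)(γ−2)² + 8α²√(1−α²)γ(γ−1)(α²−1) ≤ 0. Consequently f(α,γ)·g(α,γ)/d(α,γ) ≥ 0. -/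
/-- Signs of the three factors `d`, `f`, `g` in the fidelity difference of the analytical
2→1 LOCC purification protocol, and nonnegativity of `f·g/d`. -/
theorem stmt_10 :
    ∀ α ∈ Set.Icc (0 : ℝ) 1, ∀ γ ∈ Set.Icc (0 : ℝ) 0.4,
      (0 < 2 * (1 + 2 * α * Real.sqrt (1 - α ^ 2) * (γ - 1) ^ 4)) ∧
      (α * γ * (γ - 2) * (γ - 1) ^ 2 ≤ 0) ∧
      (4 * α - 4 * α ^ 3 - Real.sqrt (1 - α ^ 2) * (γ - 2) ^ 2 +
          8 * α ^ 2 * Real.sqrt (1 - α ^ 2) * γ * (γ - 1) * (α ^ 2 - 1) ≤ 0) ∧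
      0 ≤ (α * γ * (γ - 2) * (γ - 1) ^ 2) *
            (4 * α - 4 * α ^ 3 - Real.sqrt (1 - α ^ 2) * (γ - 2) ^ 2 +
              8 * α ^ 2 * Real.sqrt (1 - α ^ 2) * γ * (γ - 1) * (α ^ 2 - 1)) /
          (2 * (1 + 2 * α * Real.sqrt (1 - α ^ 2) * (γ - 1) ^ 4)) := by
  rintro α ⟨hα0, hα1⟩ γ ⟨hγ0, hγ1⟩
  set s := Real.sqrt (1 - α ^ 2) with hs
  have hs0 : 0 ≤ s := Real.sqrt_nonneg _
  have hs2 : s ^ 2 = 1 - α ^ 2 := Real.sq_sqrt (by nlinarith)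
  have h2as : 2 * α * s ≤ 1 := by nlinarith [sq_nonneg (α - s)]
  have hd : 0 < 2 * (1 + 2 * α * s * (γ - 1) ^ 4) := by
    nlinarith [mul_nonneg (mul_nonneg hα0 hs0) (pow_nonneg (sq_nonneg (γ - 1)) 2),
      pow_le_pow_left₀ (sq_nonneg (γ-1)) (le_refl ((γ-1)^2)) 2]
  have hf : α * γ * (γ - 2) * (γ - 1) ^ 2 ≤ 0 := by
    nlinarith [mul_nonneg (mul_nonneg hα0 hγ0) (sq_nonneg (γ - 1))]
  have hg : 4 * α - 4 * α ^ 3 - s * (γ - 2) ^ 2 +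
      8 * α ^ 2 * s * γ * (γ - 1) * (α ^ 2 - 1) ≤ 0 := by
    have has2 : α ^ 2 * s ^ 2 ≤ 1 / 4 := by nlinarith [sq_nonneg (α * s), mul_nonneg hα0 hs0]
    have hγq : γ * (1 - γ) ≤ 1 / 4 := by nlinarith [sq_nonneg (2 * γ - 1)]
    have hγq0 : 0 ≤ γ * (1 - γ) := by nlinarith
    have hbr : 4 * α * s - (γ - 2) ^ 2 + 8 * (α ^ 2 * s ^ 2) * (γ * (1 - γ)) ≤ 0 := by
      nlinarith [mul_le_mul has2 hγq hγq0 (by norm_num : (0:ℝ) ≤ 1/4),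
        mul_nonneg (by linarith : (0:ℝ) ≤ 0.4 - γ) (by linarith : (0:ℝ) ≤ 3.6 - γ)]
    have : 4 * α - 4 * α ^ 3 - s * (γ - 2) ^ 2 +
        8 * α ^ 2 * s * γ * (γ - 1) * (α ^ 2 - 1) =
        s * (4 * α * s - (γ - 2) ^ 2 + 8 * (α ^ 2 * s ^ 2) * (γ * (1 - γ))) := by
      linear_combination (-(4 * α + 8 * α ^ 2 * s * γ * (1 - γ))) * hs2
    rw [this]
    exact mul_nonpos_of_nonneg_of_nonpos hs0 hbr
  refine ⟨hd, hf, hg, div_nonneg ?_ hd.le⟩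
  nlinarith [mul_nonneg (neg_nonneg.2 hf) (neg_nonneg.2 hg)]
end

section
/- Let R₂ = γ(1−γ)|φ₋⟩⟨φ₋| with |φ±⟩ = (1/√10, 0, 0, ±3/√10)ᵀ, and define x₀ = γ(1−γ)(14−9γ)/20, x₁ = x₂ = −γ(1−γ)(26−15γ)/20, x₃ = 3γ(1−γ)(10−3γ)/20. Let M⁽⁰⁰⁾ be the 4×4 matrix satisfying V M⁽⁰⁰⁾ V† = −(1−γ)·Diag(γ(4−3γ)/16, −3γ(4−3γ)/80, γ(32−15γ)/80, (27γ²−56γ+80)/240) for the given orthogonal matrix V with rows (0,1/√2,1/√2,0), (−3/√10,0,0,1/√10), (0,−1/√2,1/√2,0), (1/√10,0,0,3/√10). Then for every γ ∈ [0,1]: 4M⁽⁰⁰⁾ + R₂^{T_B} − x₀|00⟩⟨00| − x₁|01⟩⟨01| − x₂|10⟩⟨10| − x₃|11⟩⟨11| = −(1/3)(1−γ)(4−γ)|φ₊⟩⟨φ₊| ≤ 0, and R₂ ≥ 0, and (9/4)x₀ + (3/4)x₁ + (3/4)x₂ + (1/4)x₃ = 0. -/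
open Matrix ComplexOrder

noncomputable section

/-- Partial transpose on the second qubit. -/
def ptB (M : Matrix (Fin 2 × Fin 2) (Fin 2 × Fin 2) ℂ) :
    Matrix (Fin 2 × Fin 2) (Fin 2 × Fin 2) ℂ :=
  fun p q => M (p.1, q.2) (q.1, p.2)

/-- Index of the computational basis `|ab⟩ ↦ 2a+b`. -/
def idx (p : Fin 2 × Fin 2) : Fin 4 := ⟨2 * p.1.1 + p.2.1, by omega⟩

/-- The vectors `|φ±⟩ = (1/√10, 0, 0, ±3/√10)ᵀ`. -/
def phiP : Fin 2 × Fin 2 → ℂ := fun p =>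
  if p = (0, 0) then (Real.sqrt 10)⁻¹ else if p = (1, 1) then 3 * (Real.sqrt 10)⁻¹ else 0
def phiM : Fin 2 × Fin 2 → ℂ := fun p =>
  if p = (0, 0) then (Real.sqrt 10)⁻¹ else if p = (1, 1) then -(3 * (Real.sqrt 10)⁻¹) else 0

/-- The given orthogonal matrix `V`. -/
def Vmat : Matrix (Fin 2 × Fin 2) (Fin 2 × Fin 2) ℂ := fun p q =>
  (!![0, (Real.sqrt 2)⁻¹, (Real.sqrt 2)⁻¹, 0;
      -(3 * (Real.sqrt 10)⁻¹), 0, 0, (Real.sqrt 10)⁻¹;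
      0, -(Real.sqrt 2)⁻¹, (Real.sqrt 2)⁻¹, 0;
      (Real.sqrt 10)⁻¹, 0, 0, 3 * (Real.sqrt 10)⁻¹] : Matrix (Fin 4) (Fin 4) ℝ)
    (idx p) (idx q)

/-- The diagonal matrix `D(γ)` with `V M⁽⁰⁰⁾ V† = D(γ)`. -/
def Dmat (γ : ℝ) : Matrix (Fin 2 × Fin 2) (Fin 2 × Fin 2) ℂ :=
  Matrix.diagonal fun p =>
    (-(1 - γ) * (![γ * (4 - 3 * γ) / 16, -(3 * γ * (4 - 3 * γ)) / 80,
        γ * (32 - 15 * γ) / 80, (27 * γ ^ 2 - 56 * γ + 80) / 240] (idx p)) : ℝ)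

/-- The matrix `M⁽⁰⁰⁾` satisfying `V M⁽⁰⁰⁾ V† = D(γ)`. -/
def M00 (γ : ℝ) : Matrix (Fin 2 × Fin 2) (Fin 2 × Fin 2) ℂ := Vmatᴴ * Dmat γ * Vmat

/-- Basis projector `|ab⟩⟨ab|`. -/
def proj (a b : Fin 2) : Matrix (Fin 2 × Fin 2) (Fin 2 × Fin 2) ℂ :=
  fun p q => if p = (a, b) ∧ q = (a, b) then 1 else 0

/-
The rows of `V` are `(|10⟩ ± |01⟩)/√2`, `(−3|00⟩ + |11⟩)/√10` and `|φ₊⟩`, so `M⁽⁰⁰⁾` is block diagonal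
for `span{|01⟩, |10⟩} ⊕ span{|00⟩, |11⟩}`, and so is `R₂^{T_B}`: the partial transpose moves the
`|00⟩⟨11|` coherence of `R₂` to `|01⟩⟨10|`. The `xᵢ` make the first block cancel and the second
collapse onto a negative multiple of `|φ₊⟩⟨φ₊|`, an entrywise polynomial identity in `γ`, `1/√2`
and `1/√10`.
-/

lemma posSemidef_ofReal_smul_vecMulVec_self_star {n : Type*} [Fintype n] (v : n → ℂ) {c : ℝ}
    (hc : 0 ≤ c) : ((c : ℂ) • vecMulVec v (star v)).PosSemidef :=
  (posSemidef_vecMulVec_self_star v).smul (Complex.zero_le_real.mpr hc)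

theorem four_smul_M00_add_ptB_sub_proj_eq (γ : ℝ) :
    (4 : ℂ) • M00 γ + ptB (((γ * (1 - γ) : ℝ) : ℂ) • vecMulVec phiM (star phiM))
      - ((γ * (1 - γ) * (14 - 9 * γ) / 20 : ℝ) : ℂ) • proj 0 0
      - ((-(γ * (1 - γ) * (26 - 15 * γ) / 20) : ℝ) : ℂ) • proj 0 1
      - ((-(γ * (1 - γ) * (26 - 15 * γ) / 20) : ℝ) : ℂ) • proj 1 0
      - ((3 * γ * (1 - γ) * (10 - 3 * γ) / 20 : ℝ) : ℂ) • proj 1 1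
      = ((-(1 / 3) * (1 - γ) * (4 - γ) : ℝ) : ℂ) • vecMulVec phiP (star phiP) := by
  have h2 : (Real.sqrt 2 : ℂ)⁻¹ ^ 2 = 1 / 2 := by
    rw [inv_pow, ← Complex.ofReal_pow, Real.sq_sqrt zero_le_two]; norm_num
  have h10 : (Real.sqrt 10 : ℂ)⁻¹ ^ 2 = 1 / 10 := by
    rw [inv_pow, ← Complex.ofReal_pow, Real.sq_sqrt (by norm_num)]; norm_num
  ext ⟨a, b⟩ ⟨c, d⟩
  fin_cases a <;> fin_cases b <;> fin_cases c <;> fin_cases d <;>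
    simp [M00, Dmat, Vmat, ptB, proj, phiP, phiM, idx, mul_apply, Fintype.sum_prod_type,
      diagonal_apply, vecMulVec_apply] <;> grind

/-- The explicit dual feasible solution for the universal no-go SDP:
`R₂ = γ(1−γ)|φ₋⟩⟨φ₋| ≥ 0`, the matrix identity
`4M⁽⁰⁰⁾ + R₂^{T_B} − x₀|00⟩⟨00| − x₁|01⟩⟨01| − x₂|10⟩⟨10| − x₃|11⟩⟨11|
  = −(1/3)(1−γ)(4−γ)|φ₊⟩⟨φ₊| ≤ 0`, and the dual objective
`(9/4)x₀ + (3/4)x₁ + (3/4)x₂ + (1/4)x₃ = 0`. -/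
theorem stmt_17 (γ : ℝ) (hγ : γ ∈ Set.Icc (0 : ℝ) 1) :
    let R₂ : Matrix (Fin 2 × Fin 2) (Fin 2 × Fin 2) ℂ :=
      ((γ * (1 - γ) : ℝ) : ℂ) • vecMulVec phiM (star phiM)
    let x₀ : ℝ := γ * (1 - γ) * (14 - 9 * γ) / 20
    let x₁ : ℝ := -(γ * (1 - γ) * (26 - 15 * γ) / 20)
    let x₂ : ℝ := -(γ * (1 - γ) * (26 - 15 * γ) / 20)
    let x₃ : ℝ := 3 * γ * (1 - γ) * (10 - 3 * γ) / 20
    let LHS : Matrix (Fin 2 × Fin 2) (Fin 2 × Fin 2) ℂ :=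
      (4 : ℂ) • M00 γ + ptB R₂ - (x₀ : ℂ) • proj 0 0 - (x₁ : ℂ) • proj 0 1 -
        (x₂ : ℂ) • proj 1 0 - (x₃ : ℂ) • proj 1 1
    LHS = ((-(1 / 3) * (1 - γ) * (4 - γ) : ℝ) : ℂ) • vecMulVec phiP (star phiP) ∧
    (-LHS).PosSemidef ∧
    R₂.PosSemidef ∧
    (9 / 4) * x₀ + (3 / 4) * x₁ + (3 / 4) * x₂ + (1 / 4) * x₃ = 0 := by
  obtain ⟨hγ0, hγ1⟩ := hγ
  dsimp only
  refine ⟨four_smul_M00_add_ptB_sub_proj_eq γ, ?_, ?_, by ring⟩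
  · rw [four_smul_M00_add_ptB_sub_proj_eq γ, ← neg_smul, ← Complex.ofReal_neg]
    exact posSemidef_ofReal_smul_vecMulVec_self_star phiP (by nlinarith)
  · exact posSemidef_ofReal_smul_vecMulVec_self_star phiM (mul_nonneg hγ0 (by linarith))

end
end
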